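/- Let r ≥ 3, d ≥ 3 and m ≥ d + 2, and set b = ⌈d/2⌉. Let T_{(m,d,r)}(b) be the r-uniform supertree obtained from the loose path P_d^r by attaching m − d pendant edges at a fixed core (non-joint) vertex u of the edge e_b of the path, i.e. adding m − d new edges each consisting of u together with r − 1 new vertices. Then φ(T_{(m,d,r)}(b), x) = x^{(m−d)(r−1)}·φ(P_d^r, x) − (m−d)·x^{(m−d)(r−1)−2}·φ(P_{b−1}^r, x)·φ(P_{d−b}^r, x). -/

import Mathlib

open Classical

noncomputable section

/-- A finite hypergraph: a finite vertex set together with a finite set of edges,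
each edge being a finite set of vertices. -/
structure FinHypergraph (α : Type*) where
  verts : Finset α
  edges : Finset (Finset α)

namespace FinHypergraph

variable {α : Type*}

/-- Every edge of `H` is a subset of the vertex set of `H`. -/
def WellFormed (H : FinHypergraph α) : Prop := ∀ e ∈ H.edges, e ⊆ H.verts

/-- `H` is `r`-uniform: every edge has exactly `r` vertices. -/
def Uniform (H : FinHypergraph α) (r : ℕ) : Prop := ∀ e ∈ H.edges, e.card = r

/-- A set of edges is a matching if its members are pairwise disjoint. -/
def IsMatchingSet (M : Finset (Finset α)) : Prop :=
  ∀ e ∈ M, ∀ f ∈ M, e ≠ f → Disjoint e f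

/-- `m(H,k)`: the number of matchings of `H` consisting of exactly `k` edges. -/
noncomputable def matchCount (H : FinHypergraph α) (k : ℕ) : ℕ :=
  (H.edges.powerset.filter (fun M => M.card = k ∧ IsMatchingSet M)).card

/-- The matching polynomial `φ(H,x) = Σ_k (-1)^k m(H,k) x^(n - r·k)` of an
`r`-uniform hypergraph `H` with `n` vertices, evaluated at a real number `x`. -/
noncomputable def matchPoly (H : FinHypergraph α) (r : ℕ) (x : ℝ) : ℝ :=
  ∑ k ∈ Finset.range (H.verts.card + 1),
    (-1 : ℝ) ^ k * (H.matchCount k : ℝ) * x ^ (H.verts.card - r * k)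

/-- `H − S`: delete the vertices of `S` and all edges meeting `S`. -/
def removeVerts (H : FinHypergraph α) (S : Finset α) : FinHypergraph α :=
  ⟨H.verts \ S, H.edges.filter (fun e => Disjoint e S)⟩

/-- The edges of the `r`-uniform loose path of length `p` along the vertex labelling `w`:
the `i`-th edge consists of the `r` vertices `w (i*(r-1)), …, w ((i+1)*(r-1))`, so that
consecutive edges share exactly one vertex. -/
def loosePathEdges (r p : ℕ) (w : ℕ → α) : Finset (Finset α) :=
  (Finset.range p).image (fun i => (Finset.Icc (i * (r - 1)) ((i + 1) * (r - 1))).image w)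

/-- `P` is an `r`-uniform loose path with `m` edges (`P_m^r`); for `m = 0` it is a single
vertex with no edge. -/
def IsLoosePath (r m : ℕ) (P : FinHypergraph α) : Prop :=
  ∃ w : ℕ → α, Set.InjOn w (Set.Iic (m * (r - 1))) ∧
    P.verts = (Finset.Icc 0 (m * (r - 1))).image w ∧
    P.edges = loosePathEdges r m w

/-- The `r`-uniform loose path with `m` edges realized along the vertex labelling `w`. -/
def pathHypergraph (r m : ℕ) (w : ℕ → α) : FinHypergraph α :=
  ⟨(Finset.Icc 0 (m * (r - 1))).image w, loosePathEdges r m w⟩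

/-- `T` is obtained from `H` by attaching `k` pendant edges at the vertex `u`: each new
edge consists of `u` together with `r - 1` new vertices, the new vertices of distinct new
edges being distinct. -/
def IsPendantEdgesAttach (r k : ℕ) (H : FinHypergraph α) (u : α) (T : FinHypergraph α) : Prop :=
  u ∈ H.verts ∧ ∃ F : Fin k → Finset α,
    (∀ i, (F i).card = r - 1) ∧
    (∀ i, Disjoint (F i) H.verts) ∧
    (∀ i j, i ≠ j → Disjoint (F i) (F j)) ∧
    T.verts = H.verts ∪ Finset.univ.biUnion F ∧
    T.edges = H.edges ∪ Finset.univ.image (fun i => insert u (F i))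

end FinHypergraph

open FinHypergraph

/-! All pendant edges at `u` meet in `u`, so a matching of `T` contains at most one of them.
The matchings with none are the matchings of `P_d`, which gives `x^{(m-d)(r-1)} φ(P_d)`. A matching
with a pendant edge is that edge together with a matching of `P_d − u`; since `u` is a core vertex
of `e_b`, deleting it leaves `P_{b-1}`, `P_{d-b}` and the `r - 3` other core vertices of `e_b`, so
`φ(P_d − u) = x^{r-3} φ(P_{b-1}) φ(P_{d-b})`. Matchings of a loose path `P_p` are indexed by the
subsets of `{0, …, p-1}` without two consecutive elements, and those avoiding `b - 1` split as a
pair of such subsets on either side of it, which is the factorization of `φ(P_d − u)`. -/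

def Sparse (I : Finset ℕ) : Prop := ∀ a ∈ I, a + 1 ∉ I

def sparseSubsets (S : Finset ℕ) : Finset (Finset ℕ) := S.powerset.filter Sparse

lemma mem_sparseSubsets {S I : Finset ℕ} : I ∈ sparseSubsets S ↔ I ⊆ S ∧ Sparse I := by
  simp [sparseSubsets]

lemma two_mul_card_le_of_mem_sparseSubsets {p : ℕ} {I : Finset ℕ}
    (hI : I ∈ sparseSubsets (Finset.range p)) : 2 * I.card ≤ p + 1 := by
  obtain ⟨hIp, hI⟩ := mem_sparseSubsets.1 hI
  -- a sparse set meets each block `{2t, 2t + 1}` at most once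
  have hhalf : Set.InjOn (· / 2) (I : Set ℕ) := fun a ha b hb hab => by
    have := hI a ha; have := hI b hb; grind
  have hmaps : ∀ a ∈ I, a / 2 ∈ Finset.range ((p + 1) / 2) := fun a ha => by
    have := Finset.mem_range.1 (hIp ha); simp only [Finset.mem_range]; omega
  have := Finset.card_le_card_of_injOn _ hmaps hhalf
  rw [Finset.card_range] at this
  omega

lemma mul_card_le_of_mem_sparseSubsets {r p : ℕ} (hr : 2 ≤ r) {I : Finset ℕ}
    (hI : I ∈ sparseSubsets (Finset.range p)) : r * I.card ≤ p * (r - 1) + 1 := by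
  have h2 := two_mul_card_le_of_mem_sparseSubsets hI
  have hp : I.card ≤ p := by
    simpa using Finset.card_le_card (mem_sparseSubsets.1 hI).1
  obtain ⟨r, rfl⟩ := Nat.exists_eq_add_of_le hr
  simp only [show 2 + r - 1 = r + 1 by omega]
  nlinarith

lemma sum_sparseSubsets_erase {M : Type*} [AddCommMonoid M] (f : ℕ → M) (q s : ℕ) :
    ∑ K ∈ sparseSubsets ((Finset.range (q + 1 + s)).erase q), f K.card
      = ∑ I ∈ sparseSubsets (Finset.range q), ∑ J ∈ sparseSubsets (Finset.range s),
          f (I.card + J.card) := by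
  rw [← Finset.sum_product']
  symm
  apply Finset.sum_nbij' (fun P => P.1 ∪ P.2.image (· + (q + 1)))
    (fun K => (K.filter (· < q), K.preimage (· + (q + 1)) (add_left_injective _).injOn))
  · rintro ⟨I, J⟩ h
    simp only [Finset.mem_product, mem_sparseSubsets, Sparse, Finset.subset_iff] at h ⊢
    grind
  · intro K h
    simp only [Finset.mem_product, mem_sparseSubsets, Sparse, Finset.subset_iff,
      Finset.mem_filter, Finset.mem_preimage] at h ⊢
    grind
  · rintro ⟨I, J⟩ h
    simp only [Finset.mem_product, mem_sparseSubsets, Finset.subset_iff] at h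
    ext a <;>
      simp only [Finset.mem_filter, Finset.mem_union, Finset.mem_image, Finset.mem_preimage] <;>
      grind
  · intro K h
    simp only [mem_sparseSubsets, Finset.subset_iff] at h
    ext a
    simp only [Finset.mem_filter, Finset.mem_union, Finset.mem_image, Finset.mem_preimage]
    refine ⟨by grind, fun ha => ?_⟩
    by_cases haq : a < q
    · exact .inl ⟨ha, haq⟩
    · exact .inr ⟨a - (q + 1), by grind⟩
  · rintro ⟨I, J⟩ h
    simp only [Finset.mem_product, mem_sparseSubsets, Finset.subset_iff] at h
    rw [Finset.card_union_of_disjoint, Finset.card_image_of_injective _ (add_left_injective _)]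
    rw [Finset.disjoint_left]; grind

namespace FinHypergraph

variable {α : Type*}

lemma isMatchingSet_iff_pairwise {M : Finset (Finset α)} :
    IsMatchingSet M ↔ (M : Set (Finset α)).Pairwise Disjoint := Iff.rfl

def matchings (E : Finset (Finset α)) : Finset (Finset (Finset α)) :=
  E.powerset.filter IsMatchingSet

lemma mem_matchings {E M : Finset (Finset α)} : M ∈ matchings E ↔ M ⊆ E ∧ IsMatchingSet M := by
  simp [matchings]

lemma mul_card_le_of_mem_matchings {H : FinHypergraph α} {r : ℕ} (hwf : H.WellFormed)
    (hun : H.Uniform r) {M : Finset (Finset α)} (hM : M ∈ matchings H.edges) :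
    r * M.card ≤ H.verts.card := by
  obtain ⟨hME, hM⟩ := mem_matchings.1 hM
  calc r * M.card = (M.biUnion id).card := by
        rw [Finset.card_biUnion (t := id) hM,
          Finset.sum_congr rfl fun e he => (hun e (hME he) : (id e).card = r),
          Finset.sum_const, smul_eq_mul, mul_comm]
    _ ≤ H.verts.card := Finset.card_le_card <| Finset.biUnion_subset.2 fun e he => hwf e (hME he)

lemma matchPoly_eq_sum_matchings {H : FinHypergraph α} {r : ℕ} (hr : 1 ≤ r)
    (hwf : H.WellFormed) (hun : H.Uniform r) (x : ℝ) :
    H.matchPoly r x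
      = ∑ M ∈ matchings H.edges, (-1 : ℝ) ^ M.card * x ^ (H.verts.card - r * M.card) := by
  have hmaps : ∀ M ∈ matchings H.edges, M.card ∈ Finset.range (H.verts.card + 1) := fun M hM => by
    have := mul_card_le_of_mem_matchings hwf hun hM
    simp only [Finset.mem_range]; nlinarith
  rw [matchPoly, ← Finset.sum_fiberwise_of_maps_to hmaps]
  refine Finset.sum_congr rfl fun k _ => ?_
  rw [Finset.sum_congr rfl fun M hM => by rw [(Finset.mem_filter.1 hM).2], Finset.sum_const,
    nsmul_eq_mul, matchCount, matchings, Finset.filter_filter]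
  simp only [and_comm]
  ring

lemma WellFormed.removeVerts {H : FinHypergraph α} (hwf : H.WellFormed) (S : Finset α) :
    (H.removeVerts S).WellFormed := fun e he => by
  obtain ⟨he, hS⟩ := Finset.mem_filter.1 he
  exact Finset.subset_sdiff.2 ⟨hwf e he, hS⟩

lemma Uniform.removeVerts {H : FinHypergraph α} {r : ℕ} (hun : H.Uniform r) (S : Finset α) :
    (H.removeVerts S).Uniform r := fun e he => hun e (Finset.mem_filter.1 he).1

section PendantEdges

variable {k : ℕ} {V : Finset α} {E : Finset (Finset α)} {u : α} {F : Fin k → Finset α}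

lemma matchings_union_pendant (hE : ∀ e ∈ E, e ⊆ V)
    (hFV : ∀ i, Disjoint (F i) V) :
    matchings (E ∪ Finset.univ.image fun i => insert u (F i))
      = matchings E ∪ (Finset.univ ×ˢ matchings (E.filter fun e => Disjoint e {u})).image
          fun P => insert (insert u (F P.1)) P.2 := by
  have hdisj : ∀ i, ∀ e ∈ E, Disjoint (insert u (F i)) e ↔ u ∉ e := fun i e he => by
    rw [Finset.insert_eq, Finset.disjoint_union_left, Finset.disjoint_singleton_left,
      and_iff_left ((hFV i).mono_right (hE e he))]
  ext M
  simp only [Finset.mem_union, Finset.mem_image, Finset.mem_product, Finset.mem_univ, true_and,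
    mem_matchings, isMatchingSet_iff_pairwise, Prod.exists]
  constructor
  · rintro ⟨hM, hpair⟩
    by_cases hME : M ⊆ E
    · exact .inl ⟨hME, hpair⟩
    obtain ⟨e, heM, heE⟩ := Finset.not_subset.1 hME
    obtain ⟨i, rfl⟩ : ∃ i, insert u (F i) = e := by simpa [heE] using hM heM
    refine .inr ⟨i, M.erase (insert u (F i)), ⟨fun f hf => ?_, hpair.mono (by simp)⟩,
      Finset.insert_erase heM⟩
    obtain ⟨hfne, hfM⟩ := Finset.mem_erase.1 hf
    have hfi := hpair heM hfM hfne.symm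
    rcases Finset.mem_union.1 (hM hfM) with hfE | hfG
    · exact Finset.mem_filter.2 ⟨hfE, Finset.disjoint_singleton_right.2 ((hdisj i f hfE).1 hfi)⟩
    · obtain ⟨j, -, rfl⟩ := Finset.mem_image.1 hfG
      exact absurd hfi (Finset.not_disjoint_iff.2 ⟨u, by simp, by simp⟩)
  · rintro (⟨hME, hpair⟩ | ⟨i, M, ⟨hME, hpair⟩, rfl⟩)
    · exact ⟨hME.trans Finset.subset_union_left, hpair⟩
    have hME' : ∀ e ∈ M, e ∈ E ∧ u ∉ e := fun e he => by
      simpa [Finset.disjoint_singleton_right] using hME he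
    refine ⟨Finset.insert_subset (by simp) fun e he => Finset.mem_union_left _ (hME' e he).1, ?_⟩
    rw [Finset.coe_insert, Set.pairwise_insert_of_symm]
    exact ⟨hpair, fun e he _ => (hdisj i e (hME' e he).1).2 (hME' e he).2⟩

lemma sum_matchings_union_pendant {R : Type*} [AddCommMonoid R] (f : ℕ → R)
    (hE : ∀ e ∈ E, e ⊆ V) (hu : u ∈ V) (hF : ∀ i, (F i).Nonempty)
    (hFV : ∀ i, Disjoint (F i) V) (hFF : ∀ i j, i ≠ j → Disjoint (F i) (F j)) :
    ∑ M ∈ matchings (E ∪ Finset.univ.image fun i => insert u (F i)), f M.card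
      = ∑ M ∈ matchings E, f M.card
        + k • ∑ M ∈ matchings (E.filter fun e => Disjoint e {u}), f (M.card + 1) := by
  have hnotE : ∀ i, insert u (F i) ∉ E := fun i hi => by
    obtain ⟨a, ha⟩ := hF i
    exact Finset.disjoint_left.1 (hFV i) ha (hE _ hi (Finset.mem_insert_of_mem ha))
  have hinj : Function.Injective fun i => insert u (F i) := fun i j hij => by
    by_contra hne
    obtain ⟨a, ha⟩ := hF i
    have : a ∈ insert u (F j) := congrArg (a ∈ ·) hij ▸ Finset.mem_insert_of_mem ha
    rcases Finset.mem_insert.1 this with rfl | haj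
    · exact Finset.disjoint_left.1 (hFV i) ha hu
    · exact Finset.disjoint_left.1 (hFF i j hne) ha haj
  have hnotM : ∀ i, ∀ M ∈ matchings (E.filter fun e => Disjoint e {u}), insert u (F i) ∉ M :=
    fun i M hM hi => hnotE i (Finset.mem_filter.1 ((mem_matchings.1 hM).1 hi)).1
  rw [matchings_union_pendant hE hFV, Finset.sum_union, Finset.sum_image, Finset.sum_product,
    Finset.sum_congr rfl fun i _ => Finset.sum_congr rfl fun M hM => by
      rw [Finset.card_insert_of_notMem (hnotM i M hM)],
    Finset.sum_const, Finset.card_univ, Fintype.card_fin]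
  · rintro ⟨i, M⟩ hM ⟨j, N⟩ hN hMN
    simp only [Finset.coe_product, Set.mem_prod, Finset.mem_coe] at hM hN hMN
    have hi : insert u (F i) ∈ insert (insert u (F j)) N := hMN ▸ Finset.mem_insert_self _ _
    obtain rfl : i = j := hinj ((Finset.mem_insert.1 hi).resolve_right (hnotM i N hN.2))
    rw [← Finset.erase_insert (hnotM i M hM.2), hMN, Finset.erase_insert (hnotM i N hN.2)]
  · refine Finset.disjoint_left.2 fun M hM hM' => ?_
    obtain ⟨⟨i, N⟩, -, rfl⟩ := Finset.mem_image.1 hM'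
    exact hnotE i ((mem_matchings.1 hM).1 (Finset.mem_insert_self _ _))

end PendantEdges

lemma IsPendantEdgesAttach.card_verts {r k : ℕ} {H T : FinHypergraph α} {u : α}
    (hT : IsPendantEdgesAttach r k H u T) : T.verts.card = H.verts.card + k * (r - 1) := by
  obtain ⟨-, F, hFcard, hFV, hFF, hTV, -⟩ := hT
  rw [hTV, Finset.card_union_of_disjoint
    ((Finset.disjoint_biUnion_right _ _ _).2 fun i _ => (hFV i).symm),
    Finset.card_biUnion fun i _ j _ hij => hFF i j hij]
  simp [hFcard]

lemma IsPendantEdgesAttach.wellFormed {r k : ℕ} {H T : FinHypergraph α} {u : α}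
    (hT : IsPendantEdgesAttach r k H u T) (hwf : H.WellFormed) : T.WellFormed := by
  obtain ⟨hu, F, -, -, -, hTV, hTE⟩ := hT
  intro e he
  rw [hTE, Finset.mem_union, Finset.mem_image] at he
  rw [hTV]
  rcases he with he | ⟨i, -, rfl⟩
  · exact (hwf e he).trans Finset.subset_union_left
  · exact Finset.insert_subset (Finset.mem_union_left _ hu)
      (Finset.subset_biUnion_of_mem F (Finset.mem_univ i) |>.trans Finset.subset_union_right)

lemma IsPendantEdgesAttach.uniform {r k : ℕ} (hr : 1 ≤ r) {H T : FinHypergraph α} {u : α}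
    (hT : IsPendantEdgesAttach r k H u T) (hun : H.Uniform r) : T.Uniform r := by
  obtain ⟨hu, F, hFcard, hFV, -, -, hTE⟩ := hT
  intro e he
  rw [hTE, Finset.mem_union, Finset.mem_image] at he
  rcases he with he | ⟨i, -, rfl⟩
  · exact hun e he
  · rw [Finset.card_insert_of_notMem fun h => Finset.disjoint_left.1 (hFV i) h hu, hFcard]
    omega

lemma card_verts_removeVerts_singleton {H : FinHypergraph α} {u : α} (hu : u ∈ H.verts) :
    (H.removeVerts {u}).verts.card + 1 = H.verts.card := by
  simp [removeVerts, Finset.sdiff_singleton_eq_erase, Finset.card_erase_add_one hu]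

theorem matchPoly_of_isPendantEdgesAttach {r k : ℕ} (hr : 2 ≤ r) {H T : FinHypergraph α}
    {u : α} (hwf : H.WellFormed) (hun : H.Uniform r) (hT : IsPendantEdgesAttach r k H u T)
    (x : ℝ) :
    T.matchPoly r x = x ^ (k * (r - 1)) * H.matchPoly r x
      - k * x ^ ((k - 1) * (r - 1)) * (H.removeVerts {u}).matchPoly r x := by
  have hTcard := hT.card_verts
  rw [matchPoly_eq_sum_matchings (by omega) (hT.wellFormed hwf) (hT.uniform (by omega) hun),
    matchPoly_eq_sum_matchings (by omega) hwf hun,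
    matchPoly_eq_sum_matchings (by omega) (hwf.removeVerts _) (hun.removeVerts _)]
  obtain ⟨hu, F, hFcard, hFV, hFF, -, hTE⟩ := hT
  have hF : ∀ i, (F i).Nonempty := fun i => Finset.card_pos.1 (by rw [hFcard]; omega)
  rw [hTE, sum_matchings_union_pendant (fun c => (-1 : ℝ) ^ c * x ^ (T.verts.card - r * c))
    hwf hu hF hFV hFF, sub_eq_add_neg, Finset.mul_sum]
  congr 1
  · refine Finset.sum_congr rfl fun M hM => ?_
    have hM := mul_card_le_of_mem_matchings hwf hun hM
    rw [hTcard, show H.verts.card + k * (r - 1) - r * M.card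
      = k * (r - 1) + (H.verts.card - r * M.card) by rw [add_comm, Nat.add_sub_assoc hM],
      pow_add]
    ring
  · -- `k - 1` truncates at `k = 0`, where this term vanishes anyway
    rcases Nat.eq_zero_or_pos k with rfl | hk
    · simp
    rw [nsmul_eq_mul, Finset.mul_sum, Finset.mul_sum, ← Finset.sum_neg_distrib]
    refine Finset.sum_congr rfl fun M hM => ?_
    have hM := mul_card_le_of_mem_matchings (hwf.removeVerts _) (hun.removeVerts _) hM
    have hcard := card_verts_removeVerts_singleton hu
    have hk : 1 * (r - 1) ≤ k * (r - 1) := Nat.mul_le_mul_right _ hk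
    rw [hTcard, show H.verts.card + k * (r - 1) - r * (M.card + 1)
      = (k - 1) * (r - 1) + ((H.removeVerts {u}).verts.card - r * M.card) by
        rw [Nat.sub_one_mul, mul_add_one]; generalize r * M.card = t at *; omega, pow_add]
    ring

def loosePathPoly (r p : ℕ) (x : ℝ) : ℝ :=
  ∑ I ∈ sparseSubsets (Finset.range p), (-1 : ℝ) ^ I.card * x ^ (p * (r - 1) + 1 - r * I.card)

section LoosePath

variable {r p : ℕ} {w : ℕ → α}

def loosePathEdge (r : ℕ) (w : ℕ → α) (i : ℕ) : Finset α :=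
  (Finset.Icc (i * (r - 1)) ((i + 1) * (r - 1))).image w

lemma loosePathEdges_eq_image (r p : ℕ) (w : ℕ → α) :
    loosePathEdges r p w = (Finset.range p).image (loosePathEdge r w) := rfl

lemma mem_loosePathEdge_iff (hw : Set.InjOn w (Set.Iic (p * (r - 1)))) {t j : ℕ}
    (ht : t ≤ p * (r - 1)) (hj : j < p) :
    w t ∈ loosePathEdge r w j ↔ j * (r - 1) ≤ t ∧ t ≤ (j + 1) * (r - 1) := by
  have hjp : (j + 1) * (r - 1) ≤ p * (r - 1) := Nat.mul_le_mul_right _ hj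
  simp only [loosePathEdge, Finset.mem_image, Finset.mem_Icc]
  constructor
  · rintro ⟨s, hs, hst⟩
    rwa [← hw (Set.mem_Iic.2 (hs.2.trans hjp)) (Set.mem_Iic.2 ht) hst]
  · exact fun h => ⟨t, h, rfl⟩

lemma card_loosePathEdge (hr : 1 ≤ r) (hw : Set.InjOn w (Set.Iic (p * (r - 1)))) {j : ℕ}
    (hj : j < p) :
    (loosePathEdge r w j).card = r := by
  have hjp : (j + 1) * (r - 1) ≤ p * (r - 1) := Nat.mul_le_mul_right _ hj
  rw [loosePathEdge, Finset.card_image_of_injOn (hw.mono fun t ht => ?_), Nat.card_Icc,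
    add_one_mul]
  · omega
  · exact Set.mem_Iic.2 ((Finset.mem_Icc.1 ht).2.trans hjp)

lemma loosePathEdge_subset {j : ℕ} (hj : j < p) :
    loosePathEdge r w j ⊆ (Finset.Icc 0 (p * (r - 1))).image w :=
  Finset.image_subset_image fun _ ht => Finset.mem_Icc.2
    ⟨Nat.zero_le _, (Finset.mem_Icc.1 ht).2.trans (Nat.mul_le_mul_right _ hj)⟩

lemma disjoint_loosePathEdge_iff (hr : 2 ≤ r) (hw : Set.InjOn w (Set.Iic (p * (r - 1))))
    {i j : ℕ} (hi : i < p) (hj : j < p) :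
    Disjoint (loosePathEdge r w i) (loosePathEdge r w j) ↔ i + 1 < j ∨ j + 1 < i := by
  have hmem_i := fun t ht => mem_loosePathEdge_iff (t := t) hw ht hi
  have hmem_j := fun t ht => mem_loosePathEdge_iff (t := t) hw ht hj
  have hle : ∀ a b, a * (r - 1) ≤ b * (r - 1) → a ≤ b := fun a b h =>
    Nat.le_of_mul_le_mul_right h (by omega)
  constructor
  · intro hdisj
    by_contra! hij
    have ht : max i j * (r - 1) ≤ p * (r - 1) := Nat.mul_le_mul_right _ (by omega)
    refine Finset.disjoint_left.1 hdisj ((hmem_i _ ht).2 ⟨?_, ?_⟩) ((hmem_j _ ht).2 ⟨?_, ?_⟩) <;>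
      exact Nat.mul_le_mul_right _ (by omega)
  · rw [Finset.disjoint_left]
    intro hij a hai htj
    obtain ⟨t, ht, rfl⟩ := Finset.mem_image.1 hai
    have ht' := Finset.mem_Icc.1 ht
    have htj' := (hmem_j t (ht'.2.trans (Nat.mul_le_mul_right _ hi))).1 htj
    have := hle _ _ (htj'.1.trans ht'.2)
    have := hle _ _ (ht'.1.trans htj'.2)
    omega

lemma loosePathEdge_injOn (hr : 2 ≤ r) (hw : Set.InjOn w (Set.Iic (p * (r - 1)))) :
    Set.InjOn (loosePathEdge r w) (Finset.range p) := by
  have hstart : ∀ i j, i < p → j < p → loosePathEdge r w i = loosePathEdge r w j → j ≤ i :=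
    fun i j hi hj hij => by
      have hmem : w (i * (r - 1)) ∈ loosePathEdge r w j := hij ▸ Finset.mem_image_of_mem w
        (Finset.mem_Icc.2 ⟨le_rfl, Nat.mul_le_mul_right _ (Nat.le_succ i)⟩)
      exact Nat.le_of_mul_le_mul_right ((mem_loosePathEdge_iff hw
        (Nat.mul_le_mul_right _ hi.le) hj).1 hmem).1 (by omega)
  intro i hi j hj hij
  simp only [Finset.coe_range, Set.mem_Iio] at hi hj
  exact le_antisymm (hstart j i hj hi hij.symm) (hstart i j hi hj hij)

lemma isMatchingSet_image_loosePathEdge_iff (hr : 2 ≤ r)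
    (hw : Set.InjOn w (Set.Iic (p * (r - 1)))) {I : Finset ℕ} (hI : I ⊆ Finset.range p) :
    IsMatchingSet (I.image (loosePathEdge r w)) ↔ Sparse I := by
  have hinj := (loosePathEdge_injOn hr hw).mono (Finset.coe_subset.2 hI)
  rw [isMatchingSet_iff_pairwise, Finset.coe_image, hinj.pairwise_image]
  have hdisj : ∀ a ∈ I, ∀ b ∈ I,
      Disjoint (loosePathEdge r w a) (loosePathEdge r w b) ↔ a + 1 < b ∨ b + 1 < a :=
    fun a ha b hb => disjoint_loosePathEdge_iff hr hw (Finset.mem_range.1 (hI ha))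
      (Finset.mem_range.1 (hI hb))
  constructor
  · intro h a ha ha1
    have := (hdisj a ha _ ha1).1 (h ha ha1 (by omega))
    omega
  · intro h a ha b hb hab
    refine (hdisj a ha b hb).2 ?_
    have := h a ha
    have := h b hb
    by_contra!
    obtain rfl | rfl : b = a + 1 ∨ a = b + 1 := by omega
    all_goals simp_all

lemma sum_matchings_image_loosePathEdge {R : Type*} [AddCommMonoid R] (f : ℕ → R)
    (hr : 2 ≤ r) (hw : Set.InjOn w (Set.Iic (p * (r - 1)))) {S : Finset ℕ}
    (hS : S ⊆ Finset.range p) :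
    ∑ M ∈ matchings (S.image (loosePathEdge r w)), f M.card
      = ∑ I ∈ sparseSubsets S, f I.card := by
  have hinj := (loosePathEdge_injOn hr hw).mono (Finset.coe_subset.2 hS)
  have hmatch : matchings (S.image (loosePathEdge r w))
      = (sparseSubsets S).image (·.image (loosePathEdge r w)) := by
    rw [matchings, Finset.powerset_image, Finset.filter_image, sparseSubsets]
    exact congrArg _ (Finset.filter_congr fun I hI =>
      isMatchingSet_image_loosePathEdge_iff hr hw ((Finset.mem_powerset.1 hI).trans hS))
  have hsub : ∀ I ∈ sparseSubsets S, I ⊆ S := fun I hI => (mem_sparseSubsets.1 hI).1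
  rw [hmatch, Finset.sum_image fun I hI J hJ => Finset.image_injOn_powerset_of_injOn hinj
    (Finset.mem_powerset.2 (hsub I hI)) (Finset.mem_powerset.2 (hsub J hJ))]
  exact Finset.sum_congr rfl fun I hI => by
    rw [Finset.card_image_of_injOn (hinj.mono (Finset.coe_subset.2 (hsub I hI)))]

lemma wellFormed_pathHypergraph : (pathHypergraph r p w).WellFormed := fun e he => by
  obtain ⟨j, hj, rfl⟩ := Finset.mem_image.1 he
  exact loosePathEdge_subset (Finset.mem_range.1 hj)

lemma uniform_pathHypergraph (hr : 1 ≤ r) (hw : Set.InjOn w (Set.Iic (p * (r - 1)))) :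
    (pathHypergraph r p w).Uniform r := fun e he => by
  obtain ⟨j, hj, rfl⟩ := Finset.mem_image.1 he
  exact card_loosePathEdge hr hw (Finset.mem_range.1 hj)

lemma card_verts_pathHypergraph (hw : Set.InjOn w (Set.Iic (p * (r - 1)))) :
    (pathHypergraph r p w).verts.card = p * (r - 1) + 1 := by
  rw [pathHypergraph, Finset.card_image_of_injOn (hw.mono fun t ht => ?_), Nat.card_Icc]
  · rfl
  · exact Set.mem_Iic.2 (Finset.mem_Icc.1 ht).2

lemma matchPoly_pathHypergraph (hr : 2 ≤ r) (hw : Set.InjOn w (Set.Iic (p * (r - 1))))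
    (x : ℝ) : (pathHypergraph r p w).matchPoly r x = loosePathPoly r p x := by
  rw [matchPoly_eq_sum_matchings (by omega) wellFormed_pathHypergraph
    (uniform_pathHypergraph (by omega) hw), card_verts_pathHypergraph hw]
  exact sum_matchings_image_loosePathEdge (fun c => (-1 : ℝ) ^ c * x ^ (p * (r - 1) + 1 - r * c))
    hr hw subset_rfl

lemma matchPoly_of_isLoosePath (hr : 2 ≤ r) {P : FinHypergraph α} (hP : IsLoosePath r p P)
    (x : ℝ) : P.matchPoly r x = loosePathPoly r p x := by
  obtain ⟨w, hw, hV, hE⟩ := hP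
  obtain rfl : P = pathHypergraph r p w := by cases P; simp_all [pathHypergraph]
  exact matchPoly_pathHypergraph hr hw x

lemma edges_pathHypergraph_removeVerts_core {q c : ℕ} (hc₁ : q * (r - 1) < c)
    (hc₂ : c < (q + 1) * (r - 1)) (hq : q < p)
    (hw : Set.InjOn w (Set.Iic (p * (r - 1)))) :
    ((pathHypergraph r p w).removeVerts {w c}).edges
      = ((Finset.range p).erase q).image (loosePathEdge r w) := by
  have hcp : c ≤ p * (r - 1) := hc₂.le.trans (Nat.mul_le_mul_right _ hq)
  have hr : 0 < r - 1 := Nat.pos_of_ne_zero fun h => by simp [h] at hc₂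
  rw [removeVerts, pathHypergraph, loosePathEdges_eq_image, Finset.filter_image,
    ← Finset.filter_ne' (Finset.range p) q]
  refine congrArg (Finset.image (loosePathEdge r w)) (Finset.filter_congr fun j hj => ?_)
  rw [Finset.disjoint_singleton_right, mem_loosePathEdge_iff hw hcp (Finset.mem_range.1 hj)]
  constructor
  · rintro h rfl
    exact h ⟨hc₁.le, hc₂.le⟩
  · rintro hjq ⟨hjc, hcj⟩
    have h₁ := Nat.lt_of_mul_lt_mul_right (hjc.trans_lt hc₂)
    have h₂ := Nat.lt_of_mul_lt_mul_right (hc₁.trans_le hcj)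
    omega

lemma matchPoly_pathHypergraph_removeVerts_core {q c s : ℕ} (hc₁ : q * (r - 1) < c)
    (hc₂ : c < (q + 1) * (r - 1)) (hqs : q + 1 + s = p)
    (hw : Set.InjOn w (Set.Iic (p * (r - 1)))) (x : ℝ) :
    ((pathHypergraph r p w).removeVerts {w c}).matchPoly r x
      = x ^ (r - 3) * loosePathPoly r q x * loosePathPoly r s x := by
  subst hqs
  have hr : 3 ≤ r := by
    have := hc₁.trans hc₂
    rw [add_one_mul] at hc₂
    omega
  have hcard : ((pathHypergraph r (q + 1 + s) w).removeVerts {w c}).verts.card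
      = (q + 1 + s) * (r - 1) := by
    have := card_verts_removeVerts_singleton (H := pathHypergraph r (q + 1 + s) w)
      (Finset.mem_image_of_mem w (Finset.mem_Icc.2 ⟨Nat.zero_le c,
        hc₂.le.trans (Nat.mul_le_mul_right _ (by omega))⟩))
    rw [card_verts_pathHypergraph hw] at this
    omega
  rw [matchPoly_eq_sum_matchings (by omega) (wellFormed_pathHypergraph.removeVerts _)
    ((uniform_pathHypergraph (by omega) hw).removeVerts _), hcard,
    edges_pathHypergraph_removeVerts_core hc₁ hc₂ (by omega) hw,
    sum_matchings_image_loosePathEdge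
      (fun k => (-1 : ℝ) ^ k * x ^ ((q + 1 + s) * (r - 1) - r * k)) (by omega) hw
      (Finset.erase_subset _ _),
    sum_sparseSubsets_erase fun k => (-1 : ℝ) ^ k * x ^ ((q + 1 + s) * (r - 1) - r * k),
    loosePathPoly, loosePathPoly, mul_assoc, Finset.sum_mul_sum, Finset.mul_sum]
  refine Finset.sum_congr rfl fun I hI => ?_
  rw [Finset.mul_sum]
  refine Finset.sum_congr rfl fun J hJ => ?_
  have hI := mul_card_le_of_mem_sparseSubsets (by omega : 2 ≤ r) hI
  have hJ := mul_card_le_of_mem_sparseSubsets (by omega : 2 ≤ r) hJ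
  rw [show (q + 1 + s) * (r - 1) - r * (I.card + J.card)
      = (r - 3) + (q * (r - 1) + 1 - r * I.card) + (s * (r - 1) + 1 - r * J.card) by
    rw [add_mul, add_mul, mul_add]; omega, pow_add, pow_add, pow_add]
  ring

end LoosePath

end FinHypergraph

/-- For `r ≥ 3`, `d ≥ 3`, `m ≥ d + 2` and `b = ⌈d/2⌉`, the supertree
`T_{(m,d,r)}(b)` obtained from the loose path `P_d^r` by attaching `m − d` pendant edges
at a fixed core vertex of the edge `e_b` satisfies
`φ(T_{(m,d,r)}(b), x) = x^((m−d)(r−1))·φ(P_d^r, x)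
  − (m−d)·x^((m−d)(r−1)−2)·φ(P_{b−1}^r, x)·φ(P_{d−b}^r, x)`. -/
theorem matchPoly_pendant_edges_at_core {α : Type*} (r d m : ℕ)
    (hr : 3 ≤ r) (hd : 3 ≤ d) (hm : d + 2 ≤ m)
    (w : ℕ → α) (hw : Set.InjOn w (Set.Iic (d * (r - 1))))
    (c : ℕ) (hc1 : ((d + 1) / 2 - 1) * (r - 1) < c) (hc2 : c < ((d + 1) / 2) * (r - 1))
    (T : FinHypergraph α)
    (hT : IsPendantEdgesAttach r (m - d) (pathHypergraph r d w) (w c) T)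
    (P1 P2 : FinHypergraph α)
    (hP1 : IsLoosePath r ((d + 1) / 2 - 1) P1)
    (hP2 : IsLoosePath r (d - (d + 1) / 2) P2) :
    ∀ x : ℝ, T.matchPoly r x
      = x ^ ((m - d) * (r - 1)) * (pathHypergraph r d w).matchPoly r x
        - ((m - d : ℕ) : ℝ) * x ^ ((m - d) * (r - 1) - 2) *
            P1.matchPoly r x * P2.matchPoly r x := by
  intro x
  have hpendant : (m - d - 1) * (r - 1) + (r - 3) = (m - d) * (r - 1) - 2 := by
    have : 1 * (r - 1) ≤ (m - d) * (r - 1) := Nat.mul_le_mul_right _ (by omega)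
    rw [Nat.sub_one_mul]
    omega
  rw [matchPoly_of_isPendantEdgesAttach (by omega) wellFormed_pathHypergraph
      (uniform_pathHypergraph (by omega) hw) hT,
    matchPoly_pathHypergraph_removeVerts_core (s := d - (d + 1) / 2) hc1
      (by rwa [Nat.sub_one_add_one (by omega)]) (by omega) hw,
    matchPoly_of_isLoosePath (by omega) hP1, matchPoly_of_isLoosePath (by omega) hP2,
    ← hpendant, pow_add]
  ring
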